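/- Let θ be a random substitution of constant length ℓ ≥ 2. Then h_top(X_θ) > 0 if and only if there exist a permissible letter frequency vector ν and a letter a with ν_a > 0 and #θ(a) ≥ 2. -/

import Mathlib

open Filter Topology

namespace RandSub

variable {A : Type*} [DecidableEq A]

/-- Extension of a substitution to words: set of all concatenations of realisations. -/
def wordSubst (θ : A → Finset (List A)) : List A → Finset (List A)
  | [] => {([] : List A)}
  | a :: u => (θ a).biUnion fun v => (wordSubst θ u).image fun w => v ++ w

/-- Powers of a random substitution: `substPow θ m a` is the set of realisations of `θ^m(a)`. -/
def substPow (θ : A → Finset (List A)) : ℕ → A → Finset (List A)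
  | 0, a => {[a]}
  | m + 1, a => (substPow θ m a).biUnion fun v => wordSubst θ v

/-- `θ^m` applied to a word. -/
def wordSubstPow (θ : A → Finset (List A)) (m : ℕ) (u : List A) : Finset (List A) :=
  wordSubst (fun a => substPow θ m a) u

/-- A word is θ-legal if it occurs as a subword of some realisation of some `θ^k(a)`. -/
def IsLegal (θ : A → Finset (List A)) (u : List A) : Prop :=
  ∃ (a : A) (k : ℕ) (w : List A), w ∈ substPow θ k a ∧ u <:+: w

/-- The finite subword of a bi-infinite sequence `x` of length `n` starting at position `i`. -/
def wordAt {B : Type*} (x : ℤ → B) (i : ℤ) (n : ℕ) : List B :=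
  (List.range n).map fun j => x (i + j)

/-- The subshift associated with a random substitution. -/
def substShift (θ : A → Finset (List A)) : Set (ℤ → A) :=
  {x | ∀ (i : ℤ) (n : ℕ), IsLegal θ (wordAt x i n)}

/-- The language of a subshift. -/
def lang {B : Type*} (X : Set (ℤ → B)) : Set (List B) :=
  {u | ∃ x ∈ X, ∃ i : ℤ, u = wordAt x i u.length}

/-- The complexity function of a subshift. -/
noncomputable def complexity {B : Type*} (X : Set (ℤ → B)) (n : ℕ) : ℕ :=
  Nat.card {u : List B | u.length = n ∧ u ∈ lang X}

/-- Topological entropy of a subshift (defined via `limsup`; when the limit of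
`log p_X(n) / n` exists it coincides with it). -/
noncomputable def topEntropy {B : Type*} (X : Set (ℤ → B)) : ℝ :=
  Filter.atTop.limsup fun n : ℕ => Real.log (complexity X n) / n

/-- Primitivity of a random substitution. -/
def IsPrimitive (θ : A → Finset (List A)) : Prop :=
  ∃ k : ℕ, 0 < k ∧ ∀ a b : A, ∃ w ∈ substPow θ k b, a ∈ w

/-- A random substitution has constant length `ℓ`. -/
def ConstantLength (θ : A → Finset (List A)) (ℓ : ℕ) : Prop :=
  2 ≤ ℓ ∧ ∀ a : A, ∀ w ∈ θ a, w.length = ℓ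

/-- Permissible letter frequency vectors. -/
def IsPLFV (θ : A → Finset (List A)) (ν : A → ℝ) : Prop :=
  (∀ a, ν a ∈ Set.Icc (0 : ℝ) 1) ∧
  ∃ b : A, [b] ∈ lang (substShift θ) ∧
    ∃ n : ℕ → ℕ, Tendsto n atTop atTop ∧
      ∃ v : ℕ → List A, (∀ k, v k ∈ substPow θ (n k) b) ∧
        ∀ a, Tendsto (fun k => ((v k).count a : ℝ) / (v k).length) atTop (𝓝 (ν a))

end RandSub

/-!
If a permissible frequency vector `ν` charges a letter `a` with `#θ(a) ≥ 2`, the realisations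
`v ∈ θ^n(b)` approximating `ν` contain about `ν_a ℓ^n` copies of `a`, so `θ(v)` consists of at least
`2^(ν_a ℓ^n / 2)` words of length `ℓ^(n+1)` of the language, and the entropy is at least
`ν_a log 2 / (2ℓ)`.

Otherwise, by compactness of `[0,1]^A`, the maximal number of letters with two or more
realisations in a realisation of `θ^k(c)`, for `c` a letter of the language, is `o(ℓ^k)`; hence
`log #θ^k(c) = o(ℓ^k)`. Every word of length `n ≤ ℓ^k` of the language lies in the concatenation of
two realisations of `θ^k` on letters that occur deep inside legal words, and by a compactness
argument such letters belong to the language. So `log p(n) = o(n)`.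
-/

theorem List.eq_take_drop_of_append_eq {α : Type*} {S S' u X R R' : List α} {t : ℕ}
    (h : S' ++ u ++ R' = S ++ X ++ R) (hS : S'.length = S.length + t)
    (hu : t + u.length ≤ X.length) : u = (X.drop t).take u.length := by
  have := congrArg (fun l => (l.drop S'.length).take u.length) h
  simp only [List.append_assoc, List.drop_left, List.take_left] at this
  refine this.trans ?_
  rw [hS, List.drop_length_add_append, List.drop_append_of_le_length (by omega),
    List.take_append_of_le_length (by simp; omega)]

theorem List.exists_eq_append_cons_cons {α : Type*} {l : List α} {j : ℕ} (h : j + 1 < l.length) :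
    ∃ p c₁ c₂ q, l = p ++ c₁ :: c₂ :: q ∧ p.length = j := by
  refine ⟨l.take j, l[j], l[j + 1], l.drop (j + 2), ?_, by simp; omega⟩
  conv_lhs => rw [← List.take_append_drop j l, List.drop_eq_getElem_cons (i := j) (by omega),
    List.drop_eq_getElem_cons (i := j + 1) h]

theorem Real.log_natCast_le_log_natCast {a b : ℕ} (h : a ≤ b) : Real.log a ≤ Real.log b := by
  rcases a.eq_zero_or_pos with rfl | ha
  · simpa using Real.log_natCast_nonneg b
  · exact Real.log_le_log (by positivity) (by exact_mod_cast h)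

theorem Real.log_natCast_mul_le (a b : ℕ) :
    Real.log ((a * b : ℕ) : ℝ) ≤ Real.log a + Real.log b := by
  rcases a.eq_zero_or_pos with rfl | ha
  · simpa using Real.log_natCast_nonneg b
  rcases b.eq_zero_or_pos with rfl | hb
  · simpa using Real.log_natCast_nonneg a
  rw [Nat.cast_mul, Real.log_mul (by positivity) (by positivity)]

theorem Asymptotics.isLittleO_sum_range_pow {f : ℕ → ℝ} {r : ℝ} (hr : 1 < r)
    (hf : f =o[atTop] fun k => r ^ k) :
    (fun k => ∑ j ∈ Finset.range k, f j) =o[atTop] fun k => r ^ k := by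
  have hr0 : 0 < r - 1 := sub_pos.2 hr
  have hgeom : (fun k => ∑ j ∈ Finset.range k, r ^ j) =O[atTop] fun k => r ^ k := by
    refine Asymptotics.IsBigO.of_bound (r - 1)⁻¹ (Eventually.of_forall fun k => ?_)
    rw [geom_sum_eq hr.ne', Real.norm_of_nonneg (div_nonneg (by simp [one_le_pow₀ hr.le]) hr0.le),
      Real.norm_of_nonneg (by positivity), div_eq_inv_mul]
    gcongr
    linarith
  have hdiv : Tendsto (fun k => ∑ j ∈ Finset.range k, r ^ j) atTop atTop :=
    tendsto_atTop_mono (fun k => by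
      simpa using Finset.sum_le_sum fun j (_ : j ∈ Finset.range k) => one_le_pow₀ (M₀ := ℝ) hr.le)
      tendsto_natCast_atTop_atTop
  exact (hf.sum_range (fun j => by positivity) hdiv).trans_isBigO hgeom

namespace RandSub

section WordAt

variable {B : Type*} (x : ℤ → B)

theorem wordAt_eq_map (i : ℤ) (n : ℕ) :
    wordAt x i n = (List.range n).map fun j : ℕ => x (i + j) := by
  -- the coercion `List ℕ → List ℤ` inside `wordAt` elaborates to a `flatMap`
  have hcast (l : List ℕ) : l.flatMap (fun j : ℕ => [(j : ℤ)]) = l.map (Nat.cast : ℕ → ℤ) := by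
    induction l <;> simp_all
  simp [wordAt, hcast]

@[simp]
theorem length_wordAt (i : ℤ) (n : ℕ) : (wordAt x i n).length = n := by
  simp [wordAt_eq_map]

theorem wordAt_add (i : ℤ) (p q : ℕ) :
    wordAt x i (p + q) = wordAt x i p ++ wordAt x (i + p) q := by
  simp only [wordAt_eq_map, List.range_add, List.map_append, List.map_map]
  congr 1
  refine List.map_congr_left fun j _ => ?_
  simp [add_assoc]

theorem wordAt_getD_eq_take_drop (l : List B) (d : B) (o i : ℤ) (n : ℕ) (h₀ : 0 ≤ o + i)
    (hn : (o + i).toNat + n ≤ l.length) :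
    wordAt (fun j => l.getD (o + j).toNat d) i n = (l.drop (o + i).toNat).take n := by
  apply List.ext_getElem (by simp; omega)
  intro t ht _
  simp only [wordAt_eq_map, List.getElem_map, List.getElem_range, List.getElem_take,
    List.getElem_drop]
  rw [List.getD_eq_getElem _ _ (by simp at ht; omega)]
  congr 1
  omega

theorem exists_frequently_wordAt_eq [Finite B] (y : ℕ → ℤ → B) :
    ∃ x : ℤ → B, ∀ (i : ℤ) (n : ℕ), ∃ᶠ m in atTop, wordAt (y m) i n = wordAt x i n := by
  let U := Ultrafilter.of (atTop : Filter ℕ)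
  -- an ultrafilter on the finite type `B` is principal, which chooses the value of `x` at `j`
  have hcoord (j : ℤ) : ∃ b, ∀ᶠ m in (U : Filter ℕ), y m j = b := by
    obtain ⟨b, hb⟩ := (U.map fun m => y m j).eq_pure_of_finite
    refine ⟨b, show ({b} : Set B) ∈ U.map fun m => y m j from ?_⟩
    rw [hb]
    exact Ultrafilter.mem_pure.2 rfl
  choose x hx using hcoord
  refine ⟨x, fun i n => ?_⟩
  have hwin : ∀ᶠ m in (U : Filter ℕ), ∀ t : Fin n, y m (i + t) = x (i + t) :=
    Filter.eventually_all.2 fun t => hx _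
  refine (hwin.mono fun m hm => ?_).frequently.filter_mono (Ultrafilter.of_le _)
  simp only [wordAt_eq_map]
  exact List.map_congr_left fun t ht => hm ⟨t, List.mem_range.1 ht⟩

end WordAt

section Substitution

variable {A : Type*} [DecidableEq A] {θ : A → Finset (List A)}

@[simp]
theorem mem_wordSubst_nil {s : List A} : s ∈ wordSubst θ [] ↔ s = [] := by
  simp [wordSubst]

theorem mem_wordSubst_cons {a : A} {u s : List A} :
    s ∈ wordSubst θ (a :: u) ↔ ∃ v ∈ θ a, ∃ w ∈ wordSubst θ u, s = v ++ w := by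
  simp only [wordSubst, Finset.mem_biUnion, Finset.mem_image]
  tauto

theorem mem_wordSubst_append {u v s : List A} :
    s ∈ wordSubst θ (u ++ v) ↔
      ∃ s₁ ∈ wordSubst θ u, ∃ s₂ ∈ wordSubst θ v, s = s₁ ++ s₂ := by
  induction u generalizing s with
  | nil => simp
  | cons a u ih =>
    simp only [List.cons_append, mem_wordSubst_cons, ih]
    constructor
    · rintro ⟨w, hw, _, ⟨s₁, h₁, s₂, h₂, rfl⟩, rfl⟩
      exact ⟨w ++ s₁, ⟨w, hw, s₁, h₁, rfl⟩, s₂, h₂, (List.append_assoc _ _ _).symm⟩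
    · rintro ⟨_, ⟨w, hw, t, ht, rfl⟩, s₂, h₂, rfl⟩
      exact ⟨w, hw, t ++ s₂, ⟨t, ht, s₂, h₂, rfl⟩, List.append_assoc _ _ _⟩

theorem wordSubst_nonempty (hne : ∀ a, (θ a).Nonempty) (u : List A) :
    (wordSubst θ u).Nonempty := by
  induction u with
  | nil => exact ⟨[], by simp⟩
  | cons a u ih =>
    obtain ⟨v, hv⟩ := hne a
    obtain ⟨w, hw⟩ := ih
    exact ⟨v ++ w, mem_wordSubst_cons.2 ⟨v, hv, w, hw, rfl⟩⟩

theorem length_of_mem_wordSubst {ℓ : ℕ} (hlen : ∀ a, ∀ w ∈ θ a, w.length = ℓ)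
    {u s : List A} (hs : s ∈ wordSubst θ u) : s.length = ℓ * u.length := by
  induction u generalizing s with
  | nil => simp_all
  | cons a u ih =>
    obtain ⟨v, hv, w, hw, rfl⟩ := mem_wordSubst_cons.1 hs
    simp [hlen a v hv, ih hw, mul_add, add_comm]

theorem card_wordSubst_cons {ℓ : ℕ} (hlen : ∀ a, ∀ w ∈ θ a, w.length = ℓ) (a : A) (u : List A) :
    (wordSubst θ (a :: u)).card = (θ a).card * (wordSubst θ u).card := by
  rw [wordSubst, Finset.card_biUnion]
  · exact Finset.sum_const_nat fun v _ =>
      Finset.card_image_of_injective _ fun _ _ h => List.append_cancel_left h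
  intro v hv v' hv' hne
  simp only [Function.onFun, Finset.disjoint_left, Finset.mem_image]
  rintro _ ⟨w, -, rfl⟩ ⟨w', -, heq⟩
  exact hne (List.append_inj_left heq (by rw [hlen a v hv, hlen a v' hv'])).symm

theorem wordSubst_infix (hne : ∀ a, (θ a).Nonempty) {u U s : List A}
    (hinf : u <:+: U) (hs : s ∈ wordSubst θ u) : ∃ S ∈ wordSubst θ U, s <:+: S := by
  obtain ⟨p, q, rfl⟩ := hinf
  obtain ⟨sp, hsp⟩ := wordSubst_nonempty hne p
  obtain ⟨sq, hsq⟩ := wordSubst_nonempty hne q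
  exact ⟨sp ++ s ++ sq, mem_wordSubst_append.2
    ⟨sp ++ s, mem_wordSubst_append.2 ⟨sp, hsp, s, hs, rfl⟩, sq, hsq, rfl⟩, sp, sq, rfl⟩

theorem mem_substPow_succ {m : ℕ} {a : A} {w : List A} :
    w ∈ substPow θ (m + 1) a ↔ ∃ v ∈ substPow θ m a, w ∈ wordSubst θ v :=
  Finset.mem_biUnion

theorem substPow_nonempty (hne : ∀ a, (θ a).Nonempty) (k : ℕ) (a : A) :
    (substPow θ k a).Nonempty := by
  induction k with
  | zero => exact ⟨[a], Finset.mem_singleton_self _⟩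
  | succ m ih =>
    obtain ⟨v, hv⟩ := ih
    obtain ⟨w, hw⟩ := wordSubst_nonempty hne v
    exact ⟨w, mem_substPow_succ.2 ⟨v, hv, hw⟩⟩

theorem length_of_mem_substPow {ℓ : ℕ} (hlen : ∀ a, ∀ w ∈ θ a, w.length = ℓ)
    {k : ℕ} {a : A} {w : List A} (hw : w ∈ substPow θ k a) : w.length = ℓ ^ k := by
  induction k generalizing w with
  | zero => simp_all [substPow]
  | succ m ih =>
    obtain ⟨v, hv, hw⟩ := mem_substPow_succ.1 hw
    rw [length_of_mem_wordSubst hlen hw, ih hv, pow_succ, mul_comm]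

theorem self_mem_wordSubstPow_zero (u : List A) : u ∈ wordSubstPow θ 0 u := by
  induction u with
  | nil => simp [wordSubstPow]
  | cons c u ih => exact mem_wordSubst_cons.2 ⟨[c], Finset.mem_singleton_self _, u, ih, rfl⟩

theorem mem_wordSubstPow_succ {k : ℕ} {V w' w : List A} (h' : w' ∈ wordSubstPow θ k V)
    (h : w ∈ wordSubst θ w') : w ∈ wordSubstPow θ (k + 1) V := by
  induction V generalizing w' w with
  | nil => simp_all [wordSubstPow]
  | cons c V ih =>
    obtain ⟨B, hB, w'', hw'', rfl⟩ := mem_wordSubst_cons.1 h'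
    obtain ⟨w₁, hw₁, w₂, hw₂, rfl⟩ := mem_wordSubst_append.1 h
    exact mem_wordSubst_cons.2 ⟨w₁, mem_substPow_succ.2 ⟨B, hB, hw₁⟩, w₂, ih hw'' hw₂, rfl⟩

theorem exists_mem_wordSubstPow_of_mem_substPow_add {m k : ℕ} {a : A} {w : List A}
    (hw : w ∈ substPow θ (m + k) a) : ∃ V ∈ substPow θ m a, w ∈ wordSubstPow θ k V := by
  induction k generalizing w with
  | zero => exact ⟨w, hw, self_mem_wordSubstPow_zero w⟩
  | succ k ih =>
    obtain ⟨w', hw', hw⟩ := mem_substPow_succ.1 hw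
    obtain ⟨V, hV, hw'V⟩ := ih hw'
    exact ⟨V, hV, mem_wordSubstPow_succ hw'V hw⟩

theorem length_of_mem_wordSubstPow {ℓ : ℕ} (hlen : ∀ a, ∀ w ∈ θ a, w.length = ℓ) {k : ℕ}
    {V W : List A} (hW : W ∈ wordSubstPow θ k V) : W.length = ℓ ^ k * V.length :=
  length_of_mem_wordSubst (fun _ _ => length_of_mem_substPow hlen) hW

end Substitution

section Language

variable {A : Type*} [DecidableEq A] {θ : A → Finset (List A)}

theorem IsLegal.of_infix {u w : List A} (h : IsLegal θ w) (hinf : u <:+: w) : IsLegal θ u :=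
  let ⟨a, k, W, hW, hwW⟩ := h
  ⟨a, k, W, hW, hinf.trans hwW⟩

theorem isLegal_of_mem_substPow {k : ℕ} {a : A} {w : List A} (hw : w ∈ substPow θ k a) :
    IsLegal θ w :=
  ⟨a, k, w, hw, List.infix_refl w⟩

theorem IsLegal.of_mem_wordSubst (hne : ∀ a, (θ a).Nonempty) {u s : List A} (hu : IsLegal θ u)
    (hs : s ∈ wordSubst θ u) : IsLegal θ s := by
  obtain ⟨a, k, W, hW, hinf⟩ := hu
  obtain ⟨S, hS, hsS⟩ := wordSubst_infix hne hinf hs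
  exact (isLegal_of_mem_substPow (mem_substPow_succ.2 ⟨W, hW, hS⟩)).of_infix hsS

theorem IsLegal.exists_mem_wordSubstPow {ℓ : ℕ} (hℓ : 0 < ℓ)
    (hlen : ∀ a, ∀ w ∈ θ a, w.length = ℓ) {k : ℕ} {w : List A} (hw : IsLegal θ w)
    (hk : ℓ ^ k < w.length) : ∃ V P Q, IsLegal θ V ∧ P ++ w ++ Q ∈ wordSubstPow θ k V := by
  obtain ⟨a, K, W, hW, P, Q, rfl⟩ := hw
  have hkK : k ≤ K := by
    by_contra! hK
    have := length_of_mem_substPow hlen hW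
    have := Nat.pow_le_pow_right hℓ hK.le
    simp only [List.length_append] at *
    omega
  obtain ⟨r, rfl⟩ : ∃ r, K = r + k := ⟨K - k, by omega⟩
  obtain ⟨V, hV, hWV⟩ := exists_mem_wordSubstPow_of_mem_substPow_add hW
  exact ⟨V, P, Q, isLegal_of_mem_substPow hV, hWV⟩

def IsLegalWithMargin (θ : A → Finset (List A)) (m : ℕ) (w : List A) : Prop :=
  ∃ p q : List A, IsLegal θ (p ++ w ++ q) ∧ m ≤ p.length ∧ m ≤ q.length

theorem IsLegalWithMargin.mono {m m' : ℕ} {w : List A} (hm : m' ≤ m)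
    (h : IsLegalWithMargin θ m w) : IsLegalWithMargin θ m' w :=
  let ⟨p, q, hleg, hp, hq⟩ := h
  ⟨p, q, hleg, hm.trans hp, hm.trans hq⟩

theorem IsLegalWithMargin.of_mem_wordSubst (hne : ∀ a, (θ a).Nonempty) {ℓ : ℕ} (hℓ : 0 < ℓ)
    (hlen : ∀ a, ∀ w ∈ θ a, w.length = ℓ) {m : ℕ} {u s : List A}
    (hu : IsLegalWithMargin θ m u) (hs : s ∈ wordSubst θ u) : IsLegalWithMargin θ m s := by
  obtain ⟨p, q, hleg, hp, hq⟩ := hu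
  obtain ⟨P, hP⟩ := wordSubst_nonempty hne p
  obtain ⟨Q, hQ⟩ := wordSubst_nonempty hne q
  have hmem : P ++ s ++ Q ∈ wordSubst θ (p ++ u ++ q) := mem_wordSubst_append.2
    ⟨P ++ s, mem_wordSubst_append.2 ⟨P, hP, s, hs, rfl⟩, Q, hQ, rfl⟩
  refine ⟨P, Q, hleg.of_mem_wordSubst hne hmem, ?_, ?_⟩
  · rw [length_of_mem_wordSubst hlen hP]; nlinarith
  · rw [length_of_mem_wordSubst hlen hQ]; nlinarith

theorem isLegalWithMargin_of_mem_lang {w : List A} (hw : w ∈ lang (substShift θ)) (m : ℕ) :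
    IsLegalWithMargin θ m w := by
  obtain ⟨x, hx, i, hwi⟩ := hw
  refine ⟨wordAt x (i - m) m, wordAt x (i + w.length) m, ?_, by simp, by simp⟩
  convert hx (i - m) (m + w.length + m) using 1
  rw [wordAt_add, wordAt_add, sub_add_cancel, ← hwi]
  congr 2
  push_cast
  ring

theorem mem_lang_of_forall_isLegalWithMargin [Finite A] {w : List A}
    (h : ∀ m, IsLegalWithMargin θ m w) : w ∈ lang (substShift θ) := by
  choose p q hleg hp hq using h
  have d : A := (p 1).head (List.ne_nil_of_length_pos (hp 1))
  let y (m : ℕ) (j : ℤ) : A := (p m ++ w ++ q m).getD ((p m).length + j).toNat d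
  have hy (m : ℕ) (i : ℤ) (n : ℕ) (hm : n + i.natAbs ≤ m) :
      wordAt (y m) i n = ((p m ++ w ++ q m).drop ((p m).length + i).toNat).take n := by
    have := hp m; have := hq m
    exact wordAt_getD_eq_take_drop _ d _ i n (by omega) (by simp; omega)
  obtain ⟨x, hx⟩ := exists_frequently_wordAt_eq y
  refine ⟨x, fun i n => ?_, 0, ?_⟩
  · obtain ⟨m, heq, hm⟩ := ((hx i n).and_eventually (eventually_ge_atTop _)).exists
    rw [← heq, hy m i n hm]
    exact (hleg m).of_infix ((List.take_prefix _ _).isInfix.trans (List.drop_suffix _ _).isInfix)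
  · obtain ⟨m, heq, hm⟩ := ((hx 0 w.length).and_eventually (eventually_ge_atTop _)).exists
    rw [← heq, hy m 0 w.length (by simpa using hm)]
    simp

end Language

section Decomposition

variable {A : Type*} [DecidableEq A] {θ : A → Finset (List A)}

theorem exists_isLegalWithMargin_imp_mem_lang [Finite A] :
    ∃ M, ∀ c : A, IsLegalWithMargin θ M [c] → [c] ∈ lang (substShift θ) := by
  have (c : A) : ∃ m, IsLegalWithMargin θ m [c] → [c] ∈ lang (substShift θ) := by
    by_cases hc : ∀ m, IsLegalWithMargin θ m [c]
    · exact ⟨0, fun _ => mem_lang_of_forall_isLegalWithMargin hc⟩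
    · obtain ⟨m, hm⟩ := not_forall.1 hc
      exact ⟨m, fun h => absurd h hm⟩
  choose m hm using this
  obtain ⟨M, hM⟩ := Finite.exists_le m
  exact ⟨M, fun c h => hm c (h.mono (hM c))⟩

theorem mem_lang_of_mem_substPow [Finite A] (hne : ∀ a, (θ a).Nonempty) {ℓ : ℕ} (hℓ : 0 < ℓ)
    (hlen : ∀ a, ∀ w ∈ θ a, w.length = ℓ) {b : A} (hb : [b] ∈ lang (substShift θ)) {k : ℕ}
    {w : List A} (hw : w ∈ substPow θ k b) : w ∈ lang (substShift θ) := by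
  refine mem_lang_of_forall_isLegalWithMargin fun m => ?_
  induction k generalizing w with
  | zero =>
    rw [Finset.mem_singleton.1 hw]
    exact isLegalWithMargin_of_mem_lang hb m
  | succ k ih =>
    obtain ⟨v, hv, hw⟩ := mem_substPow_succ.1 hw
    exact (ih hv).of_mem_wordSubst hne hℓ hlen hw

theorem exists_blocks_of_mem_wordSubstPow {ℓ : ℕ} (hlen : ∀ a, ∀ w ∈ θ a, w.length = ℓ)
    {k : ℕ} {p q W : List A} {c₁ c₂ : A} (hW : W ∈ wordSubstPow θ k (p ++ c₁ :: c₂ :: q)) :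
    ∃ S B₁ B₂ R, W = S ++ (B₁ ++ B₂) ++ R ∧ S.length = ℓ ^ k * p.length ∧
      B₁ ∈ substPow θ k c₁ ∧ B₂ ∈ substPow θ k c₂ := by
  obtain ⟨S, hS, _, hW', rfl⟩ := mem_wordSubst_append.1 hW
  obtain ⟨B₁, hB₁, _, hW'', rfl⟩ := mem_wordSubst_cons.1 hW'
  obtain ⟨B₂, hB₂, R, -, rfl⟩ := mem_wordSubst_cons.1 hW''
  exact ⟨S, B₁, B₂, R, by simp, length_of_mem_wordSubstPow hlen hS, hB₁, hB₂⟩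

theorem exists_blocks_of_mem_substShift {ℓ : ℕ} (hℓ : 0 < ℓ)
    (hlen : ∀ a, ∀ w ∈ θ a, w.length = ℓ) {x : ℤ → A} (hx : x ∈ substShift θ) (i : ℤ)
    {k n : ℕ} (hn : n ≤ ℓ ^ k) (M : ℕ) :
    ∃ c₁ c₂ t B₁ B₂, IsLegalWithMargin θ M [c₁] ∧ IsLegalWithMargin θ M [c₂] ∧ t < ℓ ^ k ∧
      B₁ ∈ substPow θ k c₁ ∧ B₂ ∈ substPow θ k c₂ ∧
      wordAt x i n = ((B₁ ++ B₂).drop t).take n := by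
  -- `M + 2` blocks of margin on each side of the window leave at least `M` letters of `V`
  -- on each side of the two blocks that cover `wordAt x i n`
  set L := ℓ ^ k * (M + 2)
  have hk : 0 < ℓ ^ k := pow_pos hℓ k
  have hL : 2 * ℓ ^ k ≤ L := by simp only [L]; nlinarith
  obtain ⟨V, P, Q, hV, hWV⟩ :=
    (hx (i - L) (L + n + L)).exists_mem_wordSubstPow (k := k) hℓ hlen (by simp; omega)
  have hWlen := length_of_mem_wordSubstPow hlen hWV
  simp only [List.length_append, length_wordAt] at hWlen
  set s := P.length + L
  set j := s / ℓ ^ k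
  have hj : M + 2 ≤ j := (Nat.le_div_iff_mul_le hk).2 (by simp only [s, L]; nlinarith)
  have hjV : j + M + 2 ≤ V.length := by
    refine Nat.le_of_mul_le_mul_right ?_ hk
    have : ℓ ^ k * j ≤ s := Nat.mul_div_le s _
    simp only [s, L] at this hWlen
    nlinarith
  obtain ⟨p, c₁, c₂, q, rfl, hp⟩ := List.exists_eq_append_cons_cons (l := V) (j := j) (by omega)
  obtain ⟨S, B₁, B₂, R, hW, hS, hB₁, hB₂⟩ := exists_blocks_of_mem_wordSubstPow hlen hWV
  simp only [List.length_append, List.length_cons] at hjV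
  refine ⟨c₁, c₂, s % ℓ ^ k, B₁, B₂, ⟨p, c₂ :: q, by simpa using hV, by omega, by simp; omega⟩,
    ⟨p ++ [c₁], q, by simpa using hV, by simp; omega, by omega⟩, Nat.mod_lt _ hk, hB₁, hB₂, ?_⟩
  rw [wordAt_add, wordAt_add, sub_add_cancel] at hW
  have hu := List.eq_take_drop_of_append_eq (S' := P ++ wordAt x (i - L) L) (u := wordAt x i n)
    (X := B₁ ++ B₂) (t := s % ℓ ^ k) (by simpa only [List.append_assoc] using hW)
    (by simp only [List.length_append, length_wordAt, hS, hp, j, s, Nat.div_add_mod])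
    (by simp only [List.length_append, length_wordAt, length_of_mem_substPow hlen hB₁,
          length_of_mem_substPow hlen hB₂]
        have := Nat.mod_lt s hk; omega)
  simpa using hu

end Decomposition

section Complexity

variable {B : Type*} (X : Set (ℤ → B))

theorem complexity_le_card {n : ℕ} (F : Finset (List B))
    (hF : ∀ u, u.length = n → u ∈ lang X → u ∈ F) : complexity X n ≤ F.card := by
  rw [complexity, Nat.card_coe_set_eq, ← Set.ncard_coe_finset]
  exact Set.ncard_le_ncard (fun u hu => hF u hu.1 hu.2) F.finite_toSet

theorem card_le_complexity [Finite B] {n : ℕ} (F : Finset (List B))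
    (hF : ∀ u ∈ F, u.length = n ∧ u ∈ lang X) : F.card ≤ complexity X n := by
  rw [complexity, Nat.card_coe_set_eq, ← Set.ncard_coe_finset]
  exact Set.ncard_le_ncard hF ((List.finite_length_eq B n).subset fun u hu => hu.1)

theorem complexity_le_pow [Fintype B] (n : ℕ) : complexity X n ≤ Fintype.card B ^ n := by
  calc complexity X n ≤ Nat.card (List.Vector B n) :=
        Nat.card_mono (List.finite_length_eq B n) fun u hu => hu.1
    _ = Fintype.card B ^ n := by simp

theorem log_complexity_div_nonneg (n : ℕ) : 0 ≤ Real.log (complexity X n) / n :=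
  div_nonneg (Real.log_natCast_nonneg _) n.cast_nonneg

theorem isBoundedUnder_log_complexity_div [Fintype B] :
    IsBoundedUnder (· ≤ ·) atTop fun n : ℕ => Real.log (complexity X n) / n := by
  refine isBoundedUnder_of ⟨Real.log (Fintype.card B), fun n => ?_⟩
  rcases n.eq_zero_or_pos with rfl | hn
  · simpa using Real.log_natCast_nonneg _
  rw [div_le_iff₀ (by positivity), mul_comm, ← Real.log_pow]
  exact_mod_cast Real.log_natCast_le_log_natCast (complexity_le_pow X n)

end Complexity

section LowerBound

variable {A : Type*} [DecidableEq A] {θ : A → Finset (List A)}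

theorem two_pow_count_le_card_wordSubst (hne : ∀ a, (θ a).Nonempty) {ℓ : ℕ}
    (hlen : ∀ a, ∀ w ∈ θ a, w.length = ℓ) {a : A} (ha : 2 ≤ (θ a).card) (u : List A) :
    2 ^ u.count a ≤ (wordSubst θ u).card := by
  induction u with
  | nil => simp [wordSubst]
  | cons c u ih =>
    rw [card_wordSubst_cons hlen]
    by_cases hca : c = a
    · rw [hca, List.count_cons_self, pow_succ, mul_comm]
      exact Nat.mul_le_mul ha ih
    · rw [List.count_cons_of_ne hca]
      exact ih.trans (Nat.le_mul_of_pos_left _ (hne c).card_pos)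

theorem count_mul_log_two_le_log_complexity [Finite A] (hne : ∀ a, (θ a).Nonempty) {ℓ : ℕ}
    (hℓ : 0 < ℓ) (hlen : ∀ a, ∀ w ∈ θ a, w.length = ℓ) {a : A} (ha : 2 ≤ (θ a).card) {b : A}
    (hb : [b] ∈ lang (substShift θ)) {m : ℕ} {v : List A} (hv : v ∈ substPow θ m b) :
    v.count a * Real.log 2 ≤ Real.log (complexity (substShift θ) (ℓ ^ (m + 1))) := by
  have hcard : 2 ^ v.count a ≤ complexity (substShift θ) (ℓ ^ (m + 1)) := by
    refine (two_pow_count_le_card_wordSubst hne hlen ha v).trans (card_le_complexity _ _ ?_)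
    intro w hw
    refine ⟨?_, mem_lang_of_mem_substPow hne hℓ hlen hb (mem_substPow_succ.2 ⟨v, hv, hw⟩)⟩
    rw [length_of_mem_wordSubst hlen hw, length_of_mem_substPow hlen hv, pow_succ, mul_comm]
  rw [← Real.log_pow]
  exact_mod_cast Real.log_natCast_le_log_natCast hcard

theorem topEntropy_pos_of_isPLFV [Fintype A] (hne : ∀ a, (θ a).Nonempty) {ℓ : ℕ}
    (hCL : ConstantLength θ ℓ) {ν : A → ℝ} (hν : IsPLFV θ ν) {a : A} (hνa : 0 < ν a)
    (ha : 2 ≤ (θ a).card) : 0 < topEntropy (substShift θ) := by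
  obtain ⟨hℓ, hlen⟩ := hCL
  obtain ⟨-, b, hb, n, hn, v, hv, hfreq⟩ := hν
  set δ := ν a * Real.log 2 / (2 * ℓ)
  have hδ : 0 < δ := by have := Real.log_pos one_lt_two; positivity
  have hℓR : (0 : ℝ) < ℓ := by positivity
  have hlarge : ∀ᶠ k in atTop, δ ≤ Real.log (complexity (substShift θ) (ℓ ^ (n k + 1))) /
      (ℓ ^ (n k + 1) : ℕ) := by
    filter_upwards [(hfreq a).eventually (lt_mem_nhds (half_lt_self hνa))] with k hk
    have hlog := count_mul_log_two_le_log_complexity hne (by omega) hlen ha hb (hv k)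
    rw [length_of_mem_substPow hlen (hv k), lt_div_iff₀ (by positivity)] at hk
    rw [le_div_iff₀ (by positivity)]
    calc δ * ((ℓ ^ (n k + 1) : ℕ) : ℝ) = ν a / 2 * ((ℓ ^ n k : ℕ) : ℝ) * Real.log 2 := by
          simp only [δ]; push_cast; field_simp; ring
      _ ≤ _ := by gcongr
      _ ≤ _ := hlog
  have hpow : Tendsto (fun k => ℓ ^ (n k + 1)) atTop atTop :=
    (tendsto_pow_atTop_atTop_of_one_lt (by omega)).comp (tendsto_add_atTop_nat 1 |>.comp hn)
  exact hδ.trans_le (le_limsup_of_frequently_le (hpow.frequently hlarge.frequently)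
    (isBoundedUnder_log_complexity_div _))

end LowerBound

section Frequencies

variable {A : Type*} [DecidableEq A] {θ : A → Finset (List A)}

noncomputable def letterFreq (w : List A) (a : A) : ℝ :=
  w.count a / w.length

theorem letterFreq_mem_Icc (w : List A) (a : A) : letterFreq w a ∈ Set.Icc (0 : ℝ) 1 :=
  ⟨by unfold letterFreq; positivity,
    div_le_one_of_le₀ (by exact_mod_cast w.count_le_length) (Nat.cast_nonneg _)⟩

theorem exists_isPLFV_tendsto_letterFreq [Finite A] {c : A} (hc : [c] ∈ lang (substShift θ))
    {n : ℕ → ℕ} (hn : Tendsto n atTop atTop) {w : ℕ → List A}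
    (hw : ∀ j, w j ∈ substPow θ (n j) c) :
    ∃ ν, IsPLFV θ ν ∧ ∃ ψ : ℕ → ℕ, StrictMono ψ ∧
      ∀ a, Tendsto (fun j => letterFreq (w (ψ j)) a) atTop (𝓝 (ν a)) := by
  obtain ⟨ν, hν, ψ, hψ, hlim⟩ := (isCompact_univ_pi fun _ : A => isCompact_Icc).tendsto_subseq
    (x := fun j => letterFreq (w j)) fun j => Set.mem_univ_pi.2 (letterFreq_mem_Icc (w j))
  have hcoord := tendsto_pi_nhds.1 hlim
  exact ⟨ν, ⟨Set.mem_univ_pi.1 hν, c, hc, n ∘ ψ, hn.comp hψ.tendsto_atTop, w ∘ ψ,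
    fun j => hw (ψ j), hcoord⟩, ψ, hψ, hcoord⟩

end Frequencies

section Branching

variable {A : Type*} [Fintype A] {θ : A → Finset (List A)}

def maxCard (θ : A → Finset (List A)) : ℕ :=
  Finset.univ.sup fun a => (θ a).card

theorem maxCard_pos (hne : ∀ a, (θ a).Nonempty) (c : A) : 0 < maxCard θ :=
  (hne c).card_pos.trans_le (Finset.le_sup (f := fun a => (θ a).card) (Finset.mem_univ c))

variable [DecidableEq A]

def branchingLetters (θ : A → Finset (List A)) : Finset A :=
  Finset.univ.filter fun a => 2 ≤ (θ a).card

def branchCount (θ : A → Finset (List A)) (w : List A) : ℕ :=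
  ∑ a ∈ branchingLetters θ, w.count a

def maxBranchCount (θ : A → Finset (List A)) (k : ℕ) (c : A) : ℕ :=
  (substPow θ k c).sup (branchCount θ)

theorem branchCount_cons (c : A) (w : List A) :
    branchCount θ (c :: w) = branchCount θ w + if 2 ≤ (θ c).card then 1 else 0 := by
  simp [branchCount, branchingLetters, List.count_cons, Finset.sum_add_distrib]

theorem card_wordSubst_le_maxCard_pow {ℓ : ℕ} (hlen : ∀ a, ∀ w ∈ θ a, w.length = ℓ)
    (w : List A) : (wordSubst θ w).card ≤ maxCard θ ^ branchCount θ w := by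
  induction w with
  | nil => simp [wordSubst, branchCount]
  | cons c w ih =>
    rw [card_wordSubst_cons hlen, branchCount_cons]
    split_ifs with hc
    · rw [pow_succ']
      exact Nat.mul_le_mul (Finset.le_sup (f := fun a => (θ a).card) (Finset.mem_univ c)) ih
    · rw [add_zero]
      exact (Nat.mul_le_mul_right _ (by omega : (θ c).card ≤ 1)).trans (by rw [one_mul]; exact ih)

theorem card_substPow_le (hne : ∀ a, (θ a).Nonempty) {ℓ : ℕ}
    (hlen : ∀ a, ∀ w ∈ θ a, w.length = ℓ) (k : ℕ) (c : A) :
    (substPow θ k c).card ≤ maxCard θ ^ ∑ j ∈ Finset.range k, maxBranchCount θ j c := by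
  induction k with
  | zero => simp [substPow]
  | succ k ih =>
    calc (substPow θ (k + 1) c).card ≤ ∑ v ∈ substPow θ k c, (wordSubst θ v).card :=
          Finset.card_biUnion_le
      _ ≤ ∑ v ∈ substPow θ k c, maxCard θ ^ maxBranchCount θ k c :=
          Finset.sum_le_sum fun v hv => (card_wordSubst_le_maxCard_pow hlen v).trans
            (Nat.pow_le_pow_right (maxCard_pos hne c) (Finset.le_sup hv))
      _ ≤ _ := by
          rw [Finset.sum_const, smul_eq_mul, Finset.sum_range_succ, pow_add]
          exact Nat.mul_le_mul_right _ ih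

theorem sum_letterFreq_branchingLetters (w : List A) :
    ∑ a ∈ branchingLetters θ, letterFreq w a = branchCount θ w / w.length := by
  simp [letterFreq, branchCount, Finset.sum_div]

theorem tendsto_maxBranchCount_div (hne : ∀ a, (θ a).Nonempty) {ℓ : ℕ}
    (hlen : ∀ a, ∀ w ∈ θ a, w.length = ℓ)
    (hno : ∀ ν, IsPLFV θ ν → ∀ a, 0 < ν a → (θ a).card < 2)
    {c : A} (hc : [c] ∈ lang (substShift θ)) :
    Tendsto (fun k => (maxBranchCount θ k c : ℝ) / ℓ ^ k) atTop (𝓝 0) := by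
  refine tendsto_order.2 ⟨fun b hb => Eventually.of_forall fun k => hb.trans_le (by positivity),
    fun ε hε => ?_⟩
  by_contra h
  obtain ⟨φ, hφ, hφε⟩ := extraction_of_frequently_atTop
    (P := fun k => ε ≤ (maxBranchCount θ k c : ℝ) / ℓ ^ k)
    (by simpa [Filter.frequently_atTop] using h)
  have hmax (j : ℕ) : ∃ w ∈ substPow θ (φ j) c, maxBranchCount θ (φ j) c = branchCount θ w :=
    Finset.exists_mem_eq_sup _ (substPow_nonempty hne _ c) _
  choose w hw hwmax using hmax
  obtain ⟨ν, hν, ψ, -, hlim⟩ := exists_isPLFV_tendsto_letterFreq hc hφ.tendsto_atTop hw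
  have hzero : ∑ a ∈ branchingLetters θ, ν a = 0 := Finset.sum_eq_zero fun a ha =>
    le_antisymm (not_lt.1 fun hpos => (hno ν hν a hpos).not_ge (Finset.mem_filter.1 ha).2)
      (hν.1 a).1
  have hsum := tendsto_finsetSum (branchingLetters θ) fun a _ => hlim a
  simp only [sum_letterFreq_branchingLetters, hzero] at hsum
  refine (not_le.2 hε) (ge_of_tendsto hsum (Eventually.of_forall fun j => ?_))
  rw [← hwmax, length_of_mem_substPow hlen (hw _)]
  exact_mod_cast hφε (ψ j)

end Branching

section UpperBound

variable {A : Type*} [DecidableEq A] [Fintype A] {θ : A → Finset (List A)}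

open scoped Classical in
noncomputable def legalLetters (θ : A → Finset (List A)) : Finset A :=
  Finset.univ.filter fun c => [c] ∈ lang (substShift θ)

theorem mem_legalLetters {c : A} : c ∈ legalLetters θ ↔ [c] ∈ lang (substShift θ) := by
  simp [legalLetters]

theorem complexity_le_pow_mul_card_sq {ℓ : ℕ} (hℓ : 0 < ℓ) (hlen : ∀ a, ∀ w ∈ θ a, w.length = ℓ)
    {k n : ℕ} (hn : n ≤ ℓ ^ k) :
    complexity (substShift θ) n ≤ ℓ ^ k * ((legalLetters θ).biUnion (substPow θ k)).card ^ 2 := by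
  obtain ⟨M, hM⟩ := exists_isLegalWithMargin_imp_mem_lang (θ := θ)
  set Θ := (legalLetters θ).biUnion (substPow θ k)
  calc complexity (substShift θ) n
      ≤ ((Finset.range (ℓ ^ k) ×ˢ Θ ×ˢ Θ).image
          fun p => ((p.2.1 ++ p.2.2).drop p.1).take n).card := by
        refine complexity_le_card _ _ fun u hun ⟨x, hx, i, hxu⟩ => ?_
        obtain ⟨c₁, c₂, t, B₁, B₂, h₁, h₂, ht, hB₁, hB₂, hu⟩ :=
          exists_blocks_of_mem_substShift hℓ hlen hx i hn M
        rw [hun] at hxu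
        simp only [Finset.mem_image, Finset.mem_product, Finset.mem_range, Finset.mem_biUnion,
          mem_legalLetters, Θ]
        exact ⟨(t, B₁, B₂), ⟨ht, ⟨c₁, hM c₁ h₁, hB₁⟩, ⟨c₂, hM c₂ h₂, hB₂⟩⟩, (hxu.trans hu).symm⟩
    _ ≤ _ := Finset.card_image_le.trans (by simp [Finset.card_product, sq])

noncomputable def branchSum (θ : A → Finset (List A)) (k : ℕ) : ℕ :=
  ∑ c ∈ legalLetters θ, ∑ j ∈ Finset.range k, maxBranchCount θ j c

theorem card_biUnion_legalLetters_le (hne : ∀ a, (θ a).Nonempty) {ℓ : ℕ}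
    (hlen : ∀ a, ∀ w ∈ θ a, w.length = ℓ) (k : ℕ) :
    ((legalLetters θ).biUnion (substPow θ k)).card ≤
      Fintype.card A * maxCard θ ^ branchSum θ k :=
  calc ((legalLetters θ).biUnion (substPow θ k)).card
      ≤ ∑ c ∈ legalLetters θ, (substPow θ k c).card := Finset.card_biUnion_le
    _ ≤ ∑ c ∈ legalLetters θ, maxCard θ ^ branchSum θ k :=
        Finset.sum_le_sum fun c hc => (card_substPow_le hne hlen k c).trans
          (Nat.pow_le_pow_right (maxCard_pos hne c)
            (Finset.single_le_sum (f := fun c => ∑ j ∈ Finset.range k, maxBranchCount θ j c)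
              (fun _ _ => Nat.zero_le _) hc))
    _ ≤ _ := by rw [Finset.sum_const, smul_eq_mul]; gcongr; exact Finset.card_le_univ _

/-- The logarithm of the bound `ℓ ^ k * (#A * maxCard θ ^ branchSum θ k) ^ 2` on the complexity
at lengths `n ≤ ℓ ^ k`. -/
noncomputable def logComplexityBound (θ : A → Finset (List A)) (ℓ k : ℕ) : ℝ :=
  Real.log ℓ * k + 2 * Real.log (Fintype.card A) + 2 * Real.log (maxCard θ) * branchSum θ k

theorem log_complexity_le (hne : ∀ a, (θ a).Nonempty) {ℓ : ℕ} (hℓ : 0 < ℓ)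
    (hlen : ∀ a, ∀ w ∈ θ a, w.length = ℓ) {k n : ℕ} (hn : n ≤ ℓ ^ k) :
    Real.log (complexity (substShift θ) n) ≤ logComplexityBound θ ℓ k := by
  have hp : complexity (substShift θ) n ≤
      ℓ ^ k * (Fintype.card A * maxCard θ ^ branchSum θ k) ^ 2 :=
    (complexity_le_pow_mul_card_sq hℓ hlen hn).trans
      (by gcongr; exact card_biUnion_legalLetters_le hne hlen k)
  calc Real.log (complexity (substShift θ) n)
      ≤ Real.log (ℓ ^ k : ℕ) + 2 * Real.log (Fintype.card A * maxCard θ ^ branchSum θ k : ℕ) := by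
        refine (Real.log_natCast_le_log_natCast hp).trans ((Real.log_natCast_mul_le _ _).trans ?_)
        rw [Nat.cast_pow _ 2, Real.log_pow]; norm_num
    _ ≤ _ := by
        grw [Real.log_natCast_mul_le]
        push_cast [logComplexityBound]
        rw [Real.log_pow, Real.log_pow]
        linarith

theorem isLittleO_branchSum (hne : ∀ a, (θ a).Nonempty) {ℓ : ℕ} (hℓ : 2 ≤ ℓ)
    (hlen : ∀ a, ∀ w ∈ θ a, w.length = ℓ)
    (hno : ∀ ν, IsPLFV θ ν → ∀ a, 0 < ν a → (θ a).card < 2) :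
    (fun k => (branchSum θ k : ℝ)) =o[atTop] fun k => (ℓ : ℝ) ^ k := by
  simp only [branchSum, Nat.cast_sum]
  refine Asymptotics.IsLittleO.fun_sum fun c hc =>
    Asymptotics.isLittleO_sum_range_pow (Nat.one_lt_cast.2 hℓ) ?_
  refine (Asymptotics.isLittleO_iff_tendsto fun k hk => ?_).2
    (tendsto_maxBranchCount_div hne hlen hno (mem_legalLetters.1 hc))
  exact absurd hk (by positivity)

theorem isLittleO_logComplexityBound (hne : ∀ a, (θ a).Nonempty) {ℓ : ℕ} (hCL : ConstantLength θ ℓ)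
    (hno : ∀ ν, IsPLFV θ ν → ∀ a, 0 < ν a → (θ a).card < 2) :
    logComplexityBound θ ℓ =o[atTop] fun k => (ℓ : ℝ) ^ k := by
  have hℓ1 : (1 : ℝ) < ℓ := Nat.one_lt_cast.2 hCL.1
  refine (((isLittleO_coe_const_pow_of_one_lt hℓ1).const_mul_left _).add ?_).add
    ((isLittleO_branchSum hne hCL.1 hCL.2 hno).const_mul_left _)
  exact Asymptotics.isLittleO_const_left.2 <| Or.inr <|
    tendsto_norm_atTop_atTop.comp (tendsto_pow_atTop_atTop_of_one_lt hℓ1)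

theorem log_complexity_div_le (hne : ∀ a, (θ a).Nonempty) {ℓ : ℕ} (hCL : ConstantLength θ ℓ)
    {n : ℕ} (hn : 1 ≤ n) :
    Real.log (complexity (substShift θ) n) / n ≤
      ℓ * (logComplexityBound θ ℓ (Nat.log ℓ n + 1) / (ℓ : ℝ) ^ (Nat.log ℓ n + 1)) := by
  obtain ⟨hℓ, hlen⟩ := hCL
  set k := Nat.log ℓ n + 1
  have hkn : ℓ ^ k ≤ ℓ * n := by
    rw [pow_succ, mul_comm]; exact Nat.mul_le_mul_left _ (Nat.pow_log_le_self ℓ (by omega))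
  have hb := log_complexity_le hne (by omega) hlen (Nat.lt_pow_succ_log_self hℓ n).le
  have hb0 := (Real.log_natCast_nonneg _).trans hb
  calc Real.log (complexity (substShift θ) n) / n ≤ logComplexityBound θ ℓ k / n := by gcongr
    _ ≤ ℓ * (logComplexityBound θ ℓ k / (ℓ : ℝ) ^ k) := by
        rw [div_le_iff₀ (by positivity)]
        calc logComplexityBound θ ℓ k ≤ logComplexityBound θ ℓ k * (ℓ * n / (ℓ : ℝ) ^ k) := by
              refine le_mul_of_one_le_right hb0 ((one_le_div (by positivity)).2 ?_)
              exact_mod_cast hkn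
          _ = _ := by ring

theorem tendsto_log_complexity_div (hne : ∀ a, (θ a).Nonempty) {ℓ : ℕ} (hCL : ConstantLength θ ℓ)
    (hno : ∀ ν, IsPLFV θ ν → ∀ a, 0 < ν a → (θ a).card < 2) :
    Tendsto (fun n : ℕ => Real.log (complexity (substShift θ) n) / n) atTop (𝓝 0) := by
  have hlog : Tendsto (fun n => Nat.log ℓ n + 1) atTop atTop :=
    tendsto_atTop_atTop.2 fun b =>
      ⟨ℓ ^ b, fun n hn => (Nat.le_log_of_pow_le hCL.1 hn).trans (Nat.le_succ _)⟩
  refine tendsto_of_tendsto_of_tendsto_of_le_of_le' tendsto_const_nhds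
    (by simpa using (((isLittleO_logComplexityBound hne hCL hno).tendsto_div_nhds_zero).comp
      hlog).const_mul (ℓ : ℝ))
    (Eventually.of_forall fun n => log_complexity_div_nonneg _ n)
    ((eventually_ge_atTop 1).mono fun n hn => log_complexity_div_le hne hCL hn)

theorem topEntropy_eq_zero (hne : ∀ a, (θ a).Nonempty) {ℓ : ℕ} (hCL : ConstantLength θ ℓ)
    (hno : ∀ ν, IsPLFV θ ν → ∀ a, 0 < ν a → (θ a).card < 2) :
    topEntropy (substShift θ) = 0 :=
  (tendsto_log_complexity_div hne hCL hno).limsup_eq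

end UpperBound

end RandSub

open RandSub

/-- a constant length random substitution subshift has positive topological
entropy iff some permissible letter frequency vector gives positive frequency to a letter
with at least two realisations. -/
theorem entropy_positive_iff {A : Type*} [Fintype A] [DecidableEq A]
    (θ : A → Finset (List A)) (hne : ∀ a, (θ a).Nonempty)
    (ℓ : ℕ) (hCL : ConstantLength θ ℓ) :
    0 < topEntropy (substShift θ) ↔
      ∃ ν : A → ℝ, IsPLFV θ ν ∧ ∃ a : A, 0 < ν a ∧ 2 ≤ (θ a).card := by
  refine ⟨fun hpos => ?_, fun ⟨ν, hν, a, hνa, ha⟩ => topEntropy_pos_of_isPLFV hne hCL hν hνa ha⟩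
  by_contra! hno
  exact hpos.ne' (topEntropy_eq_zero hne hCL hno)
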